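/- arXiv:math/0206303 — 2 statements merged into one kernel-verified Lean document; each statement's English description precedes it below -/
import Mathlib

section
/- Let A: Z^5 → Z^8 be the map with matrix having rows (1,0,0,0,1),(0,1,0,0,1),(0,0,1,0,1),(0,0,0,1,1),(1,1,0,0,0),(0,1,1,0,0),(0,0,1,1,0),(1,0,0,1,0). Then the cokernel of A is isomorphic to Z^3 ⊕ Z/2. -/
/-- The matrix of the Khovanov differential `d : C^{-4,-7}(8_18) → C^{-3,-7}(8_18)`
in the bases of states `v_1,…,v_5` and `w_1,…,w_4,u_1,…,u_4`. -/
def M818 : Matrix (Fin 8) (Fin 5) ℤ :=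
  !![1,0,0,0,1;
     0,1,0,0,1;
     0,0,1,0,1;
     0,0,0,1,1;
     1,1,0,0,0;
     0,1,1,0,0;
     0,0,1,1,0;
     1,0,0,1,0]

/-!
`M818` is the unoriented incidence matrix of the wheel graph with hub `v₅`, spokes
`wᵢ = v₅vᵢ` and rim edges `u₁ = v₁v₂, …, u₄ = v₄v₁`. A vector of edge weights lies in its
image exactly when its alternating sums around the even cycles vanish and its sum around
the triangle `v₅v₁v₂` is even; the hub weight of a preimage is then `(w₁ + w₂ - u₁) / 2`.
The alternating sums around three 4-cycles that span the even cycles give `ℤ³`, the triangle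
sum mod 2 gives `ℤ/2`.
-/

open Matrix

namespace M818

/-- Rows: the 4-cycles `v₅v₁v₂v₃`, `v₅v₂v₃v₄` and the rim `v₁v₂v₃v₄`. -/
def evenCycles : Matrix (Fin 3) (Fin 8) ℤ :=
  !![1,0,-1,0,-1,1,0,0;
     0,1,0,-1,0,-1,1,0;
     0,0,0,0,1,-1,1,-1]

/-- The triangle `v₅v₁v₂`. -/
def triangle : Fin 8 → ℤ := ![1,1,0,0,1,0,0,0]

lemma evenCycles_mul : evenCycles * M818 = 0 := by decide

lemma triangle_vecMul : triangle ᵥ* M818 = (2 : ℤ) • ![1,1,0,0,1] := by decide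

lemma evenCycles_mulVec (x : Fin 8 → ℤ) :
    evenCycles *ᵥ x =
      ![x 0 - x 2 - x 4 + x 5, x 1 - x 3 - x 5 + x 6, x 4 - x 5 + x 6 - x 7] := by
  ext i
  fin_cases i <;> simp [evenCycles, mulVec, dotProduct, Fin.sum_univ_succ] <;> ring

lemma triangle_dotProduct (x : Fin 8 → ℤ) : triangle ⬝ᵥ x = x 0 + x 1 + x 4 := by
  simp [triangle, dotProduct, Fin.sum_univ_succ, add_assoc]

def cokerMap : (Fin 8 → ℤ) →ₗ[ℤ] (Fin 3 → ℤ) × ZMod 2 :=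
  evenCycles.mulVecLin.prod
    ((Int.castAddHom (ZMod 2)).toIntLinearMap ∘ₗ dotProductBilin ℤ ℤ triangle)

lemma cokerMap_apply (x : Fin 8 → ℤ) :
    cokerMap x = (evenCycles *ᵥ x, ((triangle ⬝ᵥ x : ℤ) : ZMod 2)) := rfl

lemma cokerMap_mulVec (v : Fin 5 → ℤ) : cokerMap (M818 *ᵥ v) = 0 := by
  rw [cokerMap_apply, mulVec_mulVec, evenCycles_mul, zero_mulVec,
    dotProduct_mulVec, triangle_vecMul, smul_dotProduct, smul_eq_mul,
    Int.cast_mul, Int.cast_two, (by decide : (2 : ZMod 2) = 0), zero_mul, Prod.mk_zero_zero]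

lemma exists_mulVec_eq_of_cokerMap_eq_zero (x : Fin 8 → ℤ) (hx : cokerMap x = 0) :
    ∃ v, M818 *ᵥ v = x := by
  rw [cokerMap_apply, evenCycles_mulVec, triangle_dotProduct, Prod.mk_eq_zero,
    ZMod.intCast_zmod_eq_zero_iff_dvd] at hx
  obtain ⟨hcycles, k, hk⟩ := hx
  simp only [cons_eq_zero_iff, zero_empty, and_true] at hcycles
  refine ⟨![x 0 + x 4 - k, x 1 + x 4 - k, x 2 + x 4 - k, x 3 + x 4 - k, k - x 4], ?_⟩
  ext i
  fin_cases i <;> simp [M818, mulVec, dotProduct, Fin.sum_univ_succ] <;> omega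

lemma exact_mulVecLin_cokerMap : Function.Exact M818.mulVecLin cokerMap :=
  fun x => ⟨exists_mulVec_eq_of_cokerMap_eq_zero x, fun ⟨v, hv⟩ => hv ▸ cokerMap_mulVec v⟩

lemma cokerMap_surjective : Function.Surjective cokerMap := by
  rintro ⟨a, z⟩
  refine ⟨![z.val, 0, z.val, 0, 0, a 0, a 0 + a 1, a 1 - a 2], ?_⟩
  rw [cokerMap_apply, evenCycles_mulVec, triangle_dotProduct]
  ext i
  · fin_cases i <;> simp
  · simp

end M818

/-- The cokernel of the Khovanov differential of `8_18`, i.e. the homology group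
`H^{-3,-7}(8_18)`, is isomorphic to `ℤ³ ⊕ ℤ/2`. -/
theorem khovanov_cokernel_8_18 :
    Nonempty (((Fin 8 → ℤ) ⧸ LinearMap.range M818.mulVecLin) ≃ₗ[ℤ]
      ((Fin 3 → ℤ) × ZMod 2)) :=
  ⟨M818.exact_mulVecLin_cokerMap.linearEquivOfSurjective M818.cokerMap_surjective⟩
end

section
/- Neither Z/8 nor Z is isomorphic to Z ⊕ Z ⊕ Z ⊕ Z/2. Consequently, if an automorphism φ of the abelian group G = Z^8/im(A) (A as in the 8_18 differential) satisfies φ([w_i])=[w_{i+1}], φ([u_i])=[u_{i+1}] with cyclic indices, then φ is neither the identity nor minus the identity. -/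
/-- The Khovanov homology group `H^{-3,-7}(8_18)` as the cokernel of the differential. -/
abbrev G818 : Type := (Fin 8 → ℤ) ⧸ LinearMap.range M818.mulVecLin

/-- The class `[w_i]` (for `i : Fin 4`, coordinates `0,…,3`). -/
def wcl (i : Fin 4) : G818 :=
  Submodule.Quotient.mk (Pi.single (⟨(i : ℕ), by omega⟩ : Fin 8) 1)

/-- The class `[u_i]` (for `i : Fin 4`, coordinates `4,…,7`). -/
def ucl (i : Fin 4) : G818 :=
  Submodule.Quotient.mk (Pi.single (⟨(i : ℕ) + 4, by omega⟩ : Fin 8) 1)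

lemma key1 : (Pi.single (1 : Fin 8) 1 - Pi.single 0 1 : Fin 8 → ℤ) ∉
    LinearMap.range M818.mulVecLin := by
  rintro ⟨v, hv⟩
  have h0 := congrFun hv 0
  have h1 := congrFun hv 1
  have h2 := congrFun hv 2
  have h3 := congrFun hv 3
  have h4 := congrFun hv 4
  have h5 := congrFun hv 5
  have h6 := congrFun hv 6
  have h7 := congrFun hv 7
  simp (config := { decide := true }) [M818, Matrix.mulVecLin, Matrix.mulVec,
    dotProduct, Fin.sum_univ_five, Pi.single_apply,
    show (5 : Fin 8) = (4 : Fin 7).succ from rfl,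
    show (6 : Fin 8) = ((4 : Fin 6).succ).succ from rfl,
    show (7 : Fin 8) = (((4 : Fin 5).succ).succ).succ from rfl]
    at h0 h1 h2 h3 h4 h5 h6 h7
  omega

lemma key2 : (Pi.single (1 : Fin 8) 1 - -Pi.single 0 1 : Fin 8 → ℤ) ∉
    LinearMap.range M818.mulVecLin := by
  rintro ⟨v, hv⟩
  have h0 := congrFun hv 0
  have h1 := congrFun hv 1
  have h2 := congrFun hv 2
  have h3 := congrFun hv 3
  have h4 := congrFun hv 4
  have h5 := congrFun hv 5
  have h6 := congrFun hv 6
  have h7 := congrFun hv 7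
  simp (config := { decide := true }) [M818, Matrix.mulVecLin, Matrix.mulVec,
    dotProduct, Fin.sum_univ_five, Pi.single_apply,
    show (5 : Fin 8) = (4 : Fin 7).succ from rfl,
    show (6 : Fin 8) = ((4 : Fin 6).succ).succ from rfl,
    show (7 : Fin 8) = (((4 : Fin 5).succ).succ).succ from rfl]
    at h0 h1 h2 h3 h4 h5 h6 h7
  omega

lemma wcl_one_ne_wcl_zero : wcl 1 ≠ wcl 0 := by
  intro h
  have hm := (Submodule.Quotient.eq _).mp h
  exact key1 hm

lemma wcl_one_ne_neg_wcl_zero : wcl 1 ≠ -wcl 0 := by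
  intro h
  rw [show -wcl 0 = Submodule.Quotient.mk (-(Pi.single (⟨0, by omega⟩ : Fin 8) 1)) from rfl]
    at h
  have hm := (Submodule.Quotient.eq _).mp h
  exact key2 hm

/-- Neither `ℤ/8` nor `ℤ` is isomorphic to `ℤ³ ⊕ ℤ/2`; consequently any automorphism
`φ` of `G818 = ℤ^8 / im A` with `φ([w_i]) = [w_{i+1}]` and `φ([u_i]) = [u_{i+1}]`
(cyclic indices) is neither the identity nor minus the identity. -/
theorem monodromy_8_18_nontrivial :
    (¬ Nonempty (ZMod 8 ≃+ ((Fin 3 → ℤ) × ZMod 2))) ∧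
    (¬ Nonempty (ℤ ≃+ ((Fin 3 → ℤ) × ZMod 2))) ∧
    (∀ φ : G818 ≃+ G818,
      (∀ i : Fin 4, φ (wcl i) = wcl (i + 1)) →
      (∀ i : Fin 4, φ (ucl i) = ucl (i + 1)) →
      (¬ ∀ x : G818, φ x = x) ∧ (¬ ∀ x : G818, φ x = -x)) := by
  refine ⟨?_, ?_, ?_⟩
  · rintro ⟨e⟩
    have : Infinite (ZMod 8) := Infinite.of_injective e.symm e.symm.injective
    exact not_finite (ZMod 8)
  · rintro ⟨e⟩
    have h1 : e.symm (0, 1) + e.symm (0, 1) = 0 := by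
      apply e.injective
      rw [map_add, e.apply_symm_apply, map_zero]
      simp (config := { decide := true }) [Prod.ext_iff]
    have h2 : e.symm (0, 1) = 0 := by omega
    have h3 : ((0, 1) : (Fin 3 → ℤ) × ZMod 2) = 0 := by
      rw [← e.apply_symm_apply ((0, 1) : (Fin 3 → ℤ) × ZMod 2), h2, map_zero]
    exact absurd (congrArg Prod.snd h3) (by decide)
  · intro φ hw _
    constructor
    · intro h
      have h1 : wcl 1 = wcl 0 := by
        have := (hw 0).symm.trans (h (wcl 0))
        simpa using this
      exact wcl_one_ne_wcl_zero h1
    · intro h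
      have h1 : wcl 1 = -wcl 0 := by
        have := (hw 0).symm.trans (h (wcl 0))
        simpa using this
      exact wcl_one_ne_neg_wcl_zero h1
end
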